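/- arXiv:2506.18822 — 6 statements merged into one kernel-verified Lean document; each statement's English description precedes it below -/
import Mathlib

section
/- Let V be a Norden vector space and W a nondegenerate subspace with tangential endomorphism P satisfying P² = λ·Id with λ < 0 (type 1 or type 2 slant). Then the restriction of g to W has neutral signature: for every space-like u ∈ W, Pu is time-like, and u, Pu span a nondegenerate plane of signature (1,1). -/
/-! Since `g(Ju, v) = g(u, Jv)` and `J u - P u` is orthogonal to `W`, one gets
`g(Pu, Pu) = g(P²u, u) = λ g(u, u)`, so `P` turns space-like vectors of `W` into time-like ones.
The Gram determinant of `u, Pu` is then negative, which also forces `u, Pu` to be independent. -/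

theorem LinearMap.BilinForm.linearIndependent_pair_of_det_ne_zero {K V : Type*} [Field K]
    [AddCommGroup V] [Module K V] (g : LinearMap.BilinForm K V) {u v : V}
    (hdet : g u u * g v v - g u v * g v u ≠ 0) : LinearIndependent K ![u, v] := by
  rw [LinearIndependent.pair_iff]
  intro s t hst
  have hu : s * g u u + t * g v u = 0 := by
    simpa using congrArg (g · u) hst
  have hv : s * g u v + t * g v v = 0 := by
    simpa using congrArg (g · v) hst
  have hs : s * (g u u * g v v - g u v * g v u) = 0 := by
    linear_combination g v v * hu - g v u * hv
  have ht : t * (g u u * g v v - g u v * g v u) = 0 := by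
    linear_combination g u u * hv - g u v * hu
  exact ⟨(mul_eq_zero.mp hs).resolve_right hdet, (mul_eq_zero.mp ht).resolve_right hdet⟩

section Norden

variable {V : Type*} [AddCommGroup V] [Module ℝ V] {g : LinearMap.BilinForm ℝ V}
  {J : V →ₗ[ℝ] V}

theorem apply_map_left_eq_apply_map_right (hJ2 : ∀ u, J (J u) = -u)
    (hg : ∀ u v, g (J u) (J v) = -g u v) (a b : V) : g (J a) b = g a (J b) := by
  simpa [hJ2 b] using hg a (J b)

theorem apply_tangential_tangential (hsymm : ∀ u v, g u v = g v u)
    (hJ2 : ∀ u, J (J u) = -u) (hg : ∀ u v, g (J u) (J v) = -g u v)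
    {W : Submodule ℝ V} {P : V → V} (hPW : ∀ u ∈ W, P u ∈ W)
    (horth : ∀ u ∈ W, ∀ w ∈ W, g (J u - P u) w = 0) {u : V} (hu : u ∈ W) :
    g (P u) (P u) = g (P (P u)) u := by
  have hJP : ∀ a ∈ W, ∀ w ∈ W, g (J a) w = g (P a) w := fun a ha w hw => by
    simpa [sub_eq_zero] using horth a ha w hw
  calc g (P u) (P u) = g (J u) (P u) := (hJP u hu _ (hPW u hu)).symm
    _ = g (J (P u)) u := by rw [apply_map_left_eq_apply_map_right hJ2 hg, hsymm]
    _ = g (P (P u)) u := hJP _ (hPW u hu) u hu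

end Norden

theorem stmt_6_general {V : Type*} [AddCommGroup V] [Module ℝ V]
    (g : LinearMap.BilinForm ℝ V) (J : V →ₗ[ℝ] V)
    (hsymm : ∀ u v, g u v = g v u)
    (hJ2 : ∀ u, J (J u) = -u)
    (hg : ∀ u v, g (J u) (J v) = -g u v)
    (W : Submodule ℝ V)
    (P : V → V)
    (hPW : ∀ u ∈ W, P u ∈ W)
    (horth : ∀ u ∈ W, ∀ w ∈ W, g (J u - P u) w = 0)
    (lam : ℝ) (hlam : lam < 0)
    (hP2 : ∀ u ∈ W, P (P u) = lam • u) :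
    ∀ u ∈ W, 0 < g u u →
      g (P u) (P u) < 0 ∧
      g u u * g (P u) (P u) - (g u (P u)) ^ 2 < 0 ∧
      LinearIndependent ℝ ![u, P u] := by
  intro u hu hpos
  have hPP : g (P u) (P u) = lam * g u u := by
    rw [apply_tangential_tangential hsymm hJ2 hg hPW horth hu, hP2 u hu, map_smul,
      LinearMap.smul_apply, smul_eq_mul]
  have htime : g (P u) (P u) < 0 := hPP ▸ mul_neg_of_neg_of_pos hlam hpos
  have hgram : g u u * g (P u) (P u) - (g u (P u)) ^ 2 < 0 := by
    nlinarith [mul_neg_of_pos_of_neg hpos htime, sq_nonneg (g u (P u))]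
  refine ⟨htime, hgram, g.linearIndependent_pair_of_det_ne_zero ?_⟩
  rw [hsymm (P u) u, ← sq]
  exact hgram.ne

theorem stmt_6 {V : Type*} [AddCommGroup V] [Module ℝ V]
    (g : LinearMap.BilinForm ℝ V) (J : V →ₗ[ℝ] V)
    (hsymm : ∀ u v, g u v = g v u)
    (hnondeg : ∀ u, (∀ v, g u v = 0) → u = 0)
    (hJ2 : ∀ u, J (J u) = -u)
    (hg : ∀ u v, g (J u) (J v) = -g u v)
    (W : Submodule ℝ V)
    (hWnondeg : ∀ w ∈ W, (∀ w' ∈ W, g w w' = 0) → w = 0)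
    (P : V → V)
    (hPW : ∀ u ∈ W, P u ∈ W)
    (horth : ∀ u ∈ W, ∀ w ∈ W, g (J u - P u) w = 0)
    (lam : ℝ) (hlam : lam < 0)
    (hP2 : ∀ u ∈ W, P (P u) = lam • u) :
    ∀ u ∈ W, 0 < g u u →
      g (P u) (P u) < 0 ∧
      g u u * g (P u) (P u) - (g u (P u)) ^ 2 < 0 ∧
      LinearIndependent ℝ ![u, P u] :=
  stmt_6_general g J hsymm hJ2 hg W P hPW horth lam hlam hP2
end

section
/- Let a,b ∈ ℝ and let W ⊂ ℝ⁴ be the plane spanned by u₁ = (sin a, 0, cos a, 0) and u₂ = (0, sin b, 0, cos b), the tangent plane of the immersion x(u,v) = (u sin a, v sin b, u cos a, v cos b). With J given by the matrix swapping coordinates 1↔2 and 3↔4, and g = diag(1,-1,1,-1), the tangential part P of J on W satisfies P² = cos²(a-b)·Id on W. -/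
def J4 (v : Fin 4 → ℝ) : Fin 4 → ℝ := ![v 1, v 0, v 3, v 2]

def g4 (v w : Fin 4 → ℝ) : ℝ := v 0 * w 0 - v 1 * w 1 + v 2 * w 2 - v 3 * w 3

/-! `u₁, u₂` is a `g`-orthonormal basis of `W` of signature `(1, -1)`, so the tangential part of
`J` is `P x = g(Jx, u₁) u₁ - g(Jx, u₂) u₂`. Since `g(Ju₁, u₁) = g(Ju₂, u₂) = 0` and
`g(Ju₂, u₁) = -g(Ju₁, u₂) = cos (a - b)`, this gives `P u₁ = cos (a - b) u₂` and
`P u₂ = cos (a - b) u₁`, hence `P² = cos² (a - b)` on `W`. -/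

open Real Submodule

lemma g4_comm (v w : Fin 4 → ℝ) : g4 v w = g4 w v := by
  unfold g4; ring

lemma g4_sub_left (x y w : Fin 4 → ℝ) : g4 (x - y) w = g4 x w - g4 y w := by
  simp only [g4, Pi.sub_apply]; ring

lemma g4_add_smul_left (s t : ℝ) (x y w : Fin 4 → ℝ) :
    g4 (s • x + t • y) w = s * g4 x w + t * g4 y w := by
  simp only [g4, Pi.add_apply, Pi.smul_apply, smul_eq_mul]; ring

lemma J4_add_smul (s t : ℝ) (x y : Fin 4 → ℝ) :
    J4 (s • x + t • y) = s • J4 x + t • J4 y := by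
  funext i
  fin_cases i <;> simp [J4]

lemma eq_g4_smul_sub_g4_smul_of_mem_span_pair {u₁ u₂ w : Fin 4 → ℝ}
    (h₁₁ : g4 u₁ u₁ = 1) (h₁₂ : g4 u₁ u₂ = 0) (h₂₂ : g4 u₂ u₂ = -1)
    (hw : w ∈ span ℝ {u₁, u₂}) :
    w = g4 w u₁ • u₁ - g4 w u₂ • u₂ := by
  obtain ⟨s, t, rfl⟩ := mem_span_pair.1 hw
  rw [g4_add_smul_left, g4_add_smul_left, h₁₁, h₁₂, g4_comm u₂ u₁, h₁₂, h₂₂]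
  module

lemma tangentialPart_J4_eq_of_mem_span_pair {u₁ u₂ : Fin 4 → ℝ}
    (h₁₁ : g4 u₁ u₁ = 1) (h₁₂ : g4 u₁ u₂ = 0) (h₂₂ : g4 u₂ u₂ = -1)
    {P : (Fin 4 → ℝ) → (Fin 4 → ℝ)}
    (hPW : ∀ u ∈ span ℝ {u₁, u₂}, P u ∈ span ℝ {u₁, u₂})
    (horth : ∀ u ∈ span ℝ {u₁, u₂}, ∀ w ∈ span ℝ {u₁, u₂}, g4 (J4 u - P u) w = 0)
    {x : Fin 4 → ℝ} (hx : x ∈ span ℝ {u₁, u₂}) :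
    P x = g4 (J4 x) u₁ • u₁ - g4 (J4 x) u₂ • u₂ := by
  have hP : ∀ w ∈ span ℝ {u₁, u₂}, g4 (P x) w = g4 (J4 x) w := fun w hw ↦
    (sub_eq_zero.1 ((g4_sub_left _ _ _).symm.trans (horth x hx w hw))).symm
  rw [eq_g4_smul_sub_g4_smul_of_mem_span_pair h₁₁ h₁₂ h₂₂ (hPW x hx),
    hP u₁ (subset_span (by simp)), hP u₂ (subset_span (by simp))]

lemma tangentialPart_J4_add_smul (a b : ℝ) {P : (Fin 4 → ℝ) → (Fin 4 → ℝ)}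
    (hPW : ∀ u ∈ span ℝ {![sin a, 0, cos a, 0], ![0, sin b, 0, cos b]},
      P u ∈ span ℝ {![sin a, 0, cos a, 0], ![0, sin b, 0, cos b]})
    (horth : ∀ u ∈ span ℝ {![sin a, 0, cos a, 0], ![0, sin b, 0, cos b]},
      ∀ w ∈ span ℝ {![sin a, 0, cos a, 0], ![0, sin b, 0, cos b]}, g4 (J4 u - P u) w = 0)
    (s t : ℝ) :
    P (s • ![sin a, 0, cos a, 0] + t • ![0, sin b, 0, cos b]) =
      (cos (a - b) * t) • ![sin a, 0, cos a, 0] + (cos (a - b) * s) • ![0, sin b, 0, cos b] := by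
  set u₁ : Fin 4 → ℝ := ![sin a, 0, cos a, 0]
  set u₂ : Fin 4 → ℝ := ![0, sin b, 0, cos b]
  have h₁₁ : g4 u₁ u₁ = 1 := by simp [u₁, g4, ← sin_sq_add_cos_sq a, sq]
  have h₁₂ : g4 u₁ u₂ = 0 := by simp [u₁, u₂, g4]
  have h₂₂ : g4 u₂ u₂ = -1 := by simp [u₂, g4, ← sin_sq_add_cos_sq b, sq]; ring
  have hJ₁₁ : g4 (J4 u₁) u₁ = 0 := by simp [u₁, g4, J4]
  have hJ₁₂ : g4 (J4 u₁) u₂ = -cos (a - b) := by simp [u₁, u₂, g4, J4, cos_sub]; ring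
  have hJ₂₁ : g4 (J4 u₂) u₁ = cos (a - b) := by simp [u₁, u₂, g4, J4, cos_sub]; ring
  have hJ₂₂ : g4 (J4 u₂) u₂ = 0 := by simp [u₂, g4, J4]
  rw [tangentialPart_J4_eq_of_mem_span_pair h₁₁ h₁₂ h₂₂ hPW horth
      (add_mem (smul_mem _ _ (subset_span (by simp))) (smul_mem _ _ (subset_span (by simp)))),
    J4_add_smul, g4_add_smul_left, g4_add_smul_left, hJ₁₁, hJ₁₂, hJ₂₁, hJ₂₂]
  module

theorem stmt_9 (a b : ℝ) (W : Submodule ℝ (Fin 4 → ℝ))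
    (hW : W = Submodule.span ℝ
      {![Real.sin a, 0, Real.cos a, 0], ![0, Real.sin b, 0, Real.cos b]})
    (P : (Fin 4 → ℝ) → (Fin 4 → ℝ))
    (hPW : ∀ u ∈ W, P u ∈ W)
    (horth : ∀ u ∈ W, ∀ w ∈ W, g4 (J4 u - P u) w = 0) :
    ∀ u ∈ W, P (P u) = (Real.cos (a - b)) ^ 2 • u := by
  subst hW
  intro u hu
  obtain ⟨s, t, rfl⟩ := mem_span_pair.1 hu
  rw [tangentialPart_J4_add_smul a b hPW horth, tangentialPart_J4_add_smul a b hPW horth]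
  module
end

section
/- Let a,b ∈ ℝ and W ⊂ ℝ⁴ the plane spanned by u₁ = (sinh a, 0, cosh a, 0) and u₂ = (0, sinh b, 0, cosh b). With J(x₁,x₂,x₃,x₄) = (x₂,x₁,x₄,x₃) and g = diag(1,-1,1,-1), the tangential part P of J on W satisfies P² = (cosh²(a+b) / (cosh(2a) cosh(2b)))·Id on W. -/
theorem stmt_10 (a b : ℝ) (W : Submodule ℝ (Fin 4 → ℝ))
    (hW : W = Submodule.span ℝ
      {![Real.sinh a, 0, Real.cosh a, 0], ![0, Real.sinh b, 0, Real.cosh b]})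
    (P : (Fin 4 → ℝ) → (Fin 4 → ℝ))
    (hPW : ∀ u ∈ W, P u ∈ W)
    (horth : ∀ u ∈ W, ∀ w ∈ W, g4 (J4 u - P u) w = 0) :
    ∀ u ∈ W, P (P u) =
      ((Real.cosh (a + b)) ^ 2 / (Real.cosh (2 * a) * Real.cosh (2 * b))) • u := by
  have hA : Real.cosh (2 * a) ≠ 0 := (Real.cosh_pos _).ne'
  have hB : Real.cosh (2 * b) ≠ 0 := (Real.cosh_pos _).ne'
  have hu1 : (![Real.sinh a, 0, Real.cosh a, 0] : Fin 4 → ℝ) ∈ W := by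
    rw [hW]; exact Submodule.subset_span (by simp)
  have hu2 : (![0, Real.sinh b, 0, Real.cosh b] : Fin 4 → ℝ) ∈ W := by
    rw [hW]; exact Submodule.subset_span (by simp)
  have key : ∀ c d : ℝ,
      P (c • ![Real.sinh a, 0, Real.cosh a, 0] + d • ![0, Real.sinh b, 0, Real.cosh b]) =
        (d * Real.cosh (a + b) / Real.cosh (2 * a)) • ![Real.sinh a, 0, Real.cosh a, 0]
        + (c * Real.cosh (a + b) / Real.cosh (2 * b)) • ![0, Real.sinh b, 0, Real.cosh b] := by
    intro c d
    have hv : c • ![Real.sinh a, 0, Real.cosh a, 0] + d • ![0, Real.sinh b, 0, Real.cosh b] ∈ W :=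
      W.add_mem (W.smul_mem _ hu1) (W.smul_mem _ hu2)
    have hPv := hPW _ hv
    rw [hW, Submodule.mem_span_pair] at hPv
    obtain ⟨p, q, hpq⟩ := hPv
    have e1 := horth _ hv _ hu1
    have e2 := horth _ hv _ hu2
    rw [← hpq] at e1 e2
    simp only [g4, J4, Pi.sub_apply, Pi.add_apply, Pi.smul_apply, smul_eq_mul,
      Matrix.cons_val_zero, Matrix.cons_val_one, Matrix.head_cons,
      Matrix.cons_val_two, Matrix.tail_cons, Matrix.cons_val_three] at e1 e2
    have hca : Real.cosh (2 * a) = Real.cosh a ^ 2 + Real.sinh a ^ 2 := by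
      rw [two_mul, Real.cosh_add]; ring
    have hcb : Real.cosh (2 * b) = Real.cosh b ^ 2 + Real.sinh b ^ 2 := by
      rw [two_mul, Real.cosh_add]; ring
    have hp : p = d * Real.cosh (a + b) / Real.cosh (2 * a) := by
      field_simp
      rw [Real.cosh_add, mul_comm a 2, hca]
      nlinarith [e1]
    have hq : q = c * Real.cosh (a + b) / Real.cosh (2 * b) := by
      field_simp
      rw [Real.cosh_add, mul_comm b 2, hcb]
      nlinarith [e2]
    rw [← hpq, hp, hq]
  intro u hu
  rw [hW, Submodule.mem_span_pair] at hu
  obtain ⟨c, d, hcd⟩ := hu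
  rw [← hcd, key c d, key (d * Real.cosh (a + b) / Real.cosh (2 * a))
      (c * Real.cosh (a + b) / Real.cosh (2 * b)), smul_add, smul_smul, smul_smul]
  congr 1
  · congr 1
    field_simp
  · congr 1
    field_simp
end

section
/- Let a,b ∈ ℝ with a² + b² ≠ 0 and W ⊂ ℝ⁴ the plane spanned by u₁ = (a,0,b,0) and u₂ = (0,1,0,1) (the tangent plane of x(u,v) = (au, v, bu, v)). With J(x₁,x₂,x₃,x₄) = (x₂,x₁,x₄,x₃) and g = diag(1,-1,1,-1), the tangential part P of J on W satisfies P² = ((a+b)²/(2(a²+b²)))·Id on W. -/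
theorem stmt_11 (a b : ℝ) (hab : a ^ 2 + b ^ 2 ≠ 0) (W : Submodule ℝ (Fin 4 → ℝ))
    (hW : W = Submodule.span ℝ {![a, 0, b, 0], ![0, 1, 0, 1]})
    (P : (Fin 4 → ℝ) → (Fin 4 → ℝ))
    (hPW : ∀ u ∈ W, P u ∈ W)
    (horth : ∀ u ∈ W, ∀ w ∈ W, g4 (J4 u - P u) w = 0) :
    ∀ u ∈ W, P (P u) = ((a + b) ^ 2 / (2 * (a ^ 2 + b ^ 2))) • u := by
  set u₁ : Fin 4 → ℝ := ![a, 0, b, 0] with hu₁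
  set u₂ : Fin 4 → ℝ := ![0, 1, 0, 1] with hu₂
  have h1 : u₁ ∈ W := by
    rw [hW]; exact Submodule.subset_span (by simp)
  have h2 : u₂ ∈ W := by
    rw [hW]; exact Submodule.subset_span (by simp)
  have hmem : ∀ s t : ℝ, s • u₁ + t • u₂ ∈ W := fun s t =>
    W.add_mem (W.smul_mem s h1) (W.smul_mem t h2)
  have key : ∀ s t : ℝ, P (s • u₁ + t • u₂)
      = ((a + b) * t / (a ^ 2 + b ^ 2)) • u₁ + ((a + b) * s / 2) • u₂ := by
    intro s t
    have hv := hmem s t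
    have hPv := hPW _ hv
    rw [hW] at hPv
    obtain ⟨p, q, hpq⟩ := Submodule.mem_span_pair.mp hPv
    have e1 := horth _ hv u₁ h1
    have e2 := horth _ hv u₂ h2
    rw [← hpq] at e1 e2
    simp only [hu₁, hu₂, g4, J4, Pi.sub_apply, Pi.add_apply, Pi.smul_apply,
      Matrix.cons_val_zero, Matrix.cons_val_one, Matrix.head_cons,
      Matrix.cons_val_two, Matrix.cons_val_three, Matrix.tail_cons,
      Matrix.cons_val_fin_one, smul_eq_mul] at e1 e2
    have hp : p = (a + b) * t / (a ^ 2 + b ^ 2) := by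
      field_simp
      nlinarith [e1]
    have hq : q = (a + b) * s / 2 := by nlinarith [e2]
    rw [← hpq, hp, hq]
  intro u hu
  rw [hW] at hu
  obtain ⟨s, t, rfl⟩ := Submodule.mem_span_pair.mp hu
  rw [key s t, key ((a + b) * t / (a ^ 2 + b ^ 2)) ((a + b) * s / 2)]
  rw [smul_add, smul_smul, smul_smul]
  congr 1
  · congr 1
    field_simp
  · congr 1
    field_simp
end

section
/- Let a,b ∈ ℝ with a² + b² ≠ 1 and W ⊂ ℝ⁴ the plane spanned by u₁ = (a,0,b,1) and u₂ = (0,1,0,0). With J(x₁,x₂,x₃,x₄) = (x₂,x₁,x₄,x₃) and g = diag(1,-1,1,-1), the tangential part P of J on W satisfies P² = (a²/(a²+b²-1))·Id on W. -/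
theorem stmt_12 (a b : ℝ) (hab : a ^ 2 + b ^ 2 ≠ 1) (W : Submodule ℝ (Fin 4 → ℝ))
    (hW : W = Submodule.span ℝ {![a, 0, b, 1], ![0, 1, 0, 0]})
    (P : (Fin 4 → ℝ) → (Fin 4 → ℝ))
    (hPW : ∀ u ∈ W, P u ∈ W)
    (horth : ∀ u ∈ W, ∀ w ∈ W, g4 (J4 u - P u) w = 0) :
    ∀ u ∈ W, P (P u) = (a ^ 2 / (a ^ 2 + b ^ 2 - 1)) • u := by
  set d : ℝ := a ^ 2 + b ^ 2 - 1 with hd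
  have hd0 : d ≠ 0 := sub_ne_zero.mpr hab
  set u₁ : Fin 4 → ℝ := ![a, 0, b, 1] with hu₁
  set u₂ : Fin 4 → ℝ := ![0, 1, 0, 0] with hu₂
  have hmem : ∀ s t : ℝ, s • u₁ + t • u₂ ∈ W := by
    intro s t
    rw [hW]
    exact Submodule.add_mem _
      (Submodule.smul_mem _ _ (Submodule.subset_span (by simp)))
      (Submodule.smul_mem _ _ (Submodule.subset_span (by simp)))
  have hP : ∀ s t : ℝ, P (s • u₁ + t • u₂) = (t * a / d) • u₁ + (s * a) • u₂ := by
    intro s t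
    have hu : s • u₁ + t • u₂ ∈ W := hmem s t
    have hPu : P (s • u₁ + t • u₂) ∈ W := hPW _ hu
    rw [hW, Submodule.mem_span_pair] at hPu
    obtain ⟨p, q, hpq⟩ := hPu
    have e1 := horth _ hu u₁ (by rw [hW]; exact Submodule.subset_span (by simp))
    have e2 := horth _ hu u₂ (by rw [hW]; exact Submodule.subset_span (by simp))
    rw [← hpq] at e1 e2
    simp only [g4, J4, hu₁, hu₂, Pi.add_apply, Pi.sub_apply, Pi.smul_apply,
      Matrix.cons_val_zero, Matrix.cons_val_one, Matrix.head_cons,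
      Matrix.cons_val_two, Matrix.tail_cons, Matrix.cons_val_three,
      smul_eq_mul] at e1 e2
    have hq : q = s * a := by nlinarith [e2]
    have hp : p = t * a / d := by
      rw [eq_div_iff hd0, hd]
      nlinarith [e1]
    rw [← hpq, hp, hq]
  intro u hu
  rw [hW, Submodule.mem_span_pair] at hu
  obtain ⟨s, t, hst⟩ := hu
  rw [← hst, hP s t, hP (t * a / d) (s * a)]
  funext i
  simp only [Pi.add_apply, Pi.smul_apply, smul_eq_mul]
  field_simp
end

section
/- Consider the immersion x(u,v) = e^{ku}(cosh u cos v, sinh u cos v, cosh u sin v, sinh u sin v) in ℝ⁴ with J(x₁,x₂,x₃,x₄) = (x₂,x₁,x₄,x₃) and g = diag(1,-1,1,-1). At every point, the tangential part P of J on the tangent plane W = span(∂x/∂u, ∂x/∂v) is zero, i.e. J maps W into W⊥ (the surface is totally real). -/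
theorem LinearMap.IsAlt.apply_eq_zero_of_mem_span_pair {R M : Type*} [CommRing R]
    [AddCommGroup M] [Module R M] {B : LinearMap.BilinForm R M} (hB : B.IsAlt) {a b : M}
    (hab : B a b = 0) {w w' : M} (hw : w ∈ Submodule.span R {a, b})
    (hw' : w' ∈ Submodule.span R {a, b}) : B w w' = 0 := by
  obtain ⟨s, t, rfl⟩ := Submodule.mem_span_pair.mp hw
  obtain ⟨s', t', rfl⟩ := Submodule.mem_span_pair.mp hw'
  have hba : B b a = 0 := hB.eq_iff.mp hab
  simp [hB.self_eq_zero, hab, hba]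

def kahlerForm4 : LinearMap.BilinForm ℝ (Fin 4 → ℝ) :=
  LinearMap.mk₂ ℝ (fun w w' ↦ g4 (J4 w) w')
    (fun _ _ _ ↦ by simp only [g4, J4, Pi.add_apply, Matrix.cons_val_zero, Matrix.cons_val_one,
      Matrix.cons_val]; ring)
    (fun _ _ _ ↦ by simp only [g4, J4, Pi.smul_apply, smul_eq_mul, Matrix.cons_val_zero,
      Matrix.cons_val_one, Matrix.cons_val]; ring)
    (fun _ _ _ ↦ by simp only [g4, J4, Pi.add_apply, Matrix.cons_val_zero, Matrix.cons_val_one,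
      Matrix.cons_val]; ring)
    (fun _ _ _ ↦ by simp only [g4, J4, Pi.smul_apply, smul_eq_mul, Matrix.cons_val_zero,
      Matrix.cons_val_one, Matrix.cons_val]; ring)

theorem kahlerForm4_apply (w w' : Fin 4 → ℝ) : kahlerForm4 w w' = g4 (J4 w) w' := rfl

theorem kahlerForm4_isAlt : kahlerForm4.IsAlt := fun w ↦ by
  simp only [kahlerForm4_apply, g4, J4, Matrix.cons_val_zero, Matrix.cons_val_one, Matrix.cons_val]
  ring

theorem stmt_15 (k u v : ℝ) (W : Submodule ℝ (Fin 4 → ℝ))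
    (hW : W = Submodule.span ℝ
      {![Real.exp (k * u) * (k * Real.cosh u + Real.sinh u) * Real.cos v,
         Real.exp (k * u) * (k * Real.sinh u + Real.cosh u) * Real.cos v,
         Real.exp (k * u) * (k * Real.cosh u + Real.sinh u) * Real.sin v,
         Real.exp (k * u) * (k * Real.sinh u + Real.cosh u) * Real.sin v],
       ![-(Real.exp (k * u) * Real.cosh u * Real.sin v),
         -(Real.exp (k * u) * Real.sinh u * Real.sin v),
         Real.exp (k * u) * Real.cosh u * Real.cos v,
         Real.exp (k * u) * Real.sinh u * Real.cos v]}) :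
    ∀ w ∈ W, ∀ w' ∈ W, g4 (J4 w) w' = 0 := by
  subst hW
  intro w hw w' hw'
  refine LinearMap.IsAlt.apply_eq_zero_of_mem_span_pair kahlerForm4_isAlt ?_ hw hw'
  simp only [kahlerForm4_apply, g4, J4, Matrix.cons_val_zero, Matrix.cons_val_one, Matrix.cons_val]
  ring
end
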